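/- Consider the Markov chain on ℤ ∪ {Δ} which from state 0 moves to Δ with probability 1/2 and otherwise moves to ±1 with probability 1/4 each, and from any x ≠ 0 moves to x±1 with probability 1/2 each (Δ is absorbing). For integers b₋, b₊ ≥ 1 and R ≥ 1, let E_R be the event that the chain started at 0 reaches b₊R or −b₋R before reaching Δ. Then the conditional probability that the first step is to +1, given E_R, equals 1/4 + b₋/(2(b₊+b₋)). -/

import Mathlib

open scoped BigOperators Classical

namespace KRW1d

/-- Killing function `k(x) = (1/2)·1_{x=0}` on `ℤ`. -/
noncomputable def kill (x : ℤ) : ℝ := if x = 0 then 1 / 2 else 0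

def IsNbr (x y : ℤ) : Prop := |x - y| = 1

/-- One-step weight of the killed walk on `ℤ`: survive at `x` (prob `1-k(x)`) and step to a
uniformly chosen neighbour. -/
noncomputable def stepWt (x y : ℤ) : ℝ := if IsNbr x y then (1 - kill x) / 2 else 0

noncomputable def pathWt (n : ℕ) (γ : Fin (n + 1) → ℤ) : ℝ :=
  ∏ i : Fin n, stepWt (γ i.castSucc) (γ i.succ)

/-- `P_x[τ(Λᶜ) < τ(Δ)]`: probability that the killed walk started at `x` leaves `Λ`
before being killed (sum of killed-walk weights over paths staying in `Λ` until the
final vertex, which lies outside `Λ`). -/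
noncomputable def exitProb (Λ : Set ℤ) (x : ℤ) : ℝ :=
  ∑' n : ℕ, ∑' γ : Fin (n + 1) → ℤ,
    if γ 0 = x ∧ (∀ i : Fin n, γ i.castSucc ∈ Λ) ∧ γ (Fin.last n) ∉ Λ then pathWt n γ else 0


/-!
The exit probability `h(x) = P_x[τ(Λᶜ) < τ(Δ)]` splits by the exit time `n`; decomposing each
`n`-step path sum by the first step shows that `h = 1` off `Λ` and
`h(x) = (1 - k(x))/2 · (h(x-1) + h(x+1))` on `Λ`. Away from the origin `h` is therefore affine, so
on `Λ = (-m, p)` we get `h(0) + p (h(1) - h(0)) = h(p) = 1` and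
`h(0) + m (h(-1) - h(0)) = h(-m) = 1`, while the killing at `0` gives `4 h(0) = h(-1) + h(1)`.
Solving, `h(0) = (p + m)/D` and `h(1) = (p + 3m)/D` with `D = p + m + 2pm`.
-/

lemma kill_nonneg (x : ℤ) : 0 ≤ kill x := by unfold kill; split_ifs <;> norm_num

lemma kill_le_one (x : ℤ) : kill x ≤ 1 := by unfold kill; split_ifs <;> norm_num

lemma isNbr_iff {x y : ℤ} : IsNbr x y ↔ y = x - 1 ∨ y = x + 1 := by
  rw [IsNbr, abs_eq zero_le_one]
  omega

lemma stepWt_eq (x y : ℤ) :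
    stepWt x y =
      (1 - kill x) / 2 * ((if y = x - 1 then 1 else 0) + (if y = x + 1 then 1 else 0)) := by
  rw [stepWt, isNbr_iff]
  split_ifs <;> first | ring1 | omega

lemma pathWt_nonneg (n : ℕ) (γ : Fin (n + 1) → ℤ) : 0 ≤ pathWt n γ :=
  Finset.prod_nonneg fun i _ => by
    unfold stepWt; split_ifs <;> linarith [kill_le_one (γ i.castSucc)]

lemma pathWt_cons (n : ℕ) (y : ℤ) (δ : Fin (n + 1) → ℤ) :
    pathWt (n + 1) (Fin.cons y δ) = stepWt y (δ 0) * pathWt n δ := by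
  simp only [pathWt, Fin.prod_univ_succ, Fin.castSucc_zero, Fin.cons_zero, Fin.cons_succ,
    ← Fin.succ_castSucc]

lemma abs_sub_le_of_pathWt_ne_zero {n : ℕ} {γ : Fin (n + 1) → ℤ} (h : pathWt n γ ≠ 0)
    (j : Fin (n + 1)) : |γ j - γ 0| ≤ j := by
  induction j using Fin.induction with
  | zero => simp
  | succ i ih =>
    have hstep : IsNbr (γ i.castSucc) (γ i.succ) := by
      by_contra hc
      exact h (Finset.prod_eq_zero (Finset.mem_univ i) (by simp [stepWt, hc]))
    rw [isNbr_iff] at hstep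
    simp only [Fin.val_castSucc, Fin.val_succ] at ih ⊢
    rw [abs_le] at ih ⊢
    push_cast
    omega

lemma summable_ite_pathWt {n : ℕ} (x : ℤ) (P : (Fin (n + 1) → ℤ) → Prop) [DecidablePred P]
    (hP : ∀ γ, P γ → γ 0 = x) :
    Summable fun γ : Fin (n + 1) → ℤ => if P γ then pathWt n γ else 0 := by
  refine summable_of_ne_finset_zero (s := Fintype.piFinset fun _ => Finset.Icc (x - n) (x + n))
    fun γ hγ => ?_
  by_contra hne
  obtain ⟨hPγ, hpath⟩ : P γ ∧ pathWt n γ ≠ 0 := by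
    by_cases hPγ : P γ
    · exact ⟨hPγ, by simpa [hPγ] using hne⟩
    · simp [hPγ] at hne
  refine hγ (Fintype.mem_piFinset.mpr fun j => Finset.mem_Icc.mpr ?_)
  have := abs_le.mp (abs_sub_le_of_pathWt_ne_zero hpath j)
  have hj : (j : ℤ) ≤ n := by exact_mod_cast Nat.lt_succ_iff.mp j.2
  rw [hP γ hPγ] at this
  omega

/-- An `abbrev`, so that its `Decidable` instance is the one appearing in `exitProb`. -/
abbrev StaysThenExits (Λ : Set ℤ) (n : ℕ) (γ : Fin (n + 1) → ℤ) : Prop :=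
  (∀ i : Fin n, γ i.castSucc ∈ Λ) ∧ γ (Fin.last n) ∉ Λ

lemma staysThenExits_cons {Λ : Set ℤ} {n : ℕ} {y : ℤ} {δ : Fin (n + 1) → ℤ} :
    StaysThenExits Λ (n + 1) (Fin.cons y δ) ↔ y ∈ Λ ∧ StaysThenExits Λ n δ := by
  simp only [StaysThenExits, Fin.forall_fin_succ, Fin.castSucc_zero, Fin.cons_zero,
    ← Fin.succ_castSucc, ← Fin.succ_last, Fin.cons_succ, and_assoc]

/-- `P_x[τ(Λᶜ) = n < τ(Δ)]`. -/
noncomputable def exitAt (Λ : Set ℤ) (n : ℕ) (x : ℤ) : ℝ :=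
  ∑' γ : Fin (n + 1) → ℤ, if γ 0 = x ∧ StaysThenExits Λ n γ then pathWt n γ else 0

lemma exitProb_eq_tsum_exitAt (Λ : Set ℤ) (x : ℤ) : exitProb Λ x = ∑' n, exitAt Λ n x :=
  rfl

lemma exitAt_zero (Λ : Set ℤ) (x : ℤ) : exitAt Λ 0 x = if x ∈ Λ then 0 else 1 := by
  rw [exitAt, ← (Equiv.funUnique (Fin 1) ℤ).symm.tsum_eq,
    tsum_eq_single x fun c hc => by simp [hc]]
  simp [StaysThenExits, pathWt, Fin.last]

lemma exitAt_succ (Λ : Set ℤ) (n : ℕ) (x : ℤ) :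
    exitAt Λ (n + 1) x =
      if x ∈ Λ then (1 - kill x) / 2 * (exitAt Λ n (x - 1) + exitAt Λ n (x + 1)) else 0 := by
  let F : (Fin (n + 2) → ℤ) → ℝ :=
    fun γ => if γ 0 = x ∧ StaysThenExits Λ (n + 1) γ then pathWt (n + 1) γ else 0
  have hF : Summable F := summable_ite_pathWt (n := n + 1) x _ fun _ h => h.1
  have hFcons : Summable (F ∘ Fin.consEquiv fun _ => ℤ) :=
    (Fin.consEquiv fun _ => ℤ).summable_iff.mpr hF
  have hF_off : ∀ y ≠ x, ∀ δ, F (Fin.cons y δ) = 0 := fun y hy δ => by simp [F, hy]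
  calc exitAt Λ (n + 1) x
      = ∑' p : ℤ × (Fin (n + 1) → ℤ), F (Fin.consEquiv (fun _ => ℤ) p) :=
        ((Fin.consEquiv fun _ => ℤ).tsum_eq F).symm
    _ = ∑' (y : ℤ) (δ : Fin (n + 1) → ℤ), F (Fin.cons y δ) := hFcons.tsum_prod
    _ = ∑' δ : Fin (n + 1) → ℤ, F (Fin.cons x δ) :=
        tsum_eq_single x fun y hy => by simp [hF_off y hy]
    _ = _ := by
        by_cases hx : x ∈ Λ
        · let G : ℤ → (Fin (n + 1) → ℤ) → ℝ :=
            fun z δ => if δ 0 = z ∧ StaysThenExits Λ n δ then pathWt n δ else 0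
          have hG : ∀ z, Summable (G z) := fun z => summable_ite_pathWt z _ fun _ h => h.1
          have hsplit :
              ∀ δ, F (Fin.cons x δ) = (1 - kill x) / 2 * (G (x - 1) δ + G (x + 1) δ) := by
            intro δ
            simp only [F, G, Fin.cons_zero, staysThenExits_cons, pathWt_cons, stepWt_eq, hx,
              true_and]
            split_ifs <;> first | ring1 | omega | tauto
          rw [tsum_congr hsplit, tsum_mul_left, (hG _).tsum_add (hG _), if_pos hx]
          rfl
        · simp [F, hx, staysThenExits_cons]

lemma exitAt_nonneg (Λ : Set ℤ) (n : ℕ) (x : ℤ) : 0 ≤ exitAt Λ n x :=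
  tsum_nonneg fun γ => by split_ifs <;> simp [pathWt_nonneg]

lemma sum_range_exitAt_le_one (Λ : Set ℤ) (N : ℕ) (x : ℤ) :
    ∑ n ∈ Finset.range N, exitAt Λ n x ≤ 1 := by
  induction N generalizing x with
  | zero => simp
  | succ N ih =>
    rw [Finset.sum_range_succ']
    by_cases hx : x ∈ Λ
    · simp only [exitAt_succ, exitAt_zero, hx, if_true, add_zero, ← Finset.mul_sum,
        Finset.sum_add_distrib]
      nlinarith [ih (x - 1), ih (x + 1), kill_nonneg x, kill_le_one x]
    · simp [exitAt_succ, exitAt_zero, hx]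

lemma summable_exitAt (Λ : Set ℤ) (x : ℤ) : Summable fun n => exitAt Λ n x :=
  summable_of_sum_range_le (exitAt_nonneg Λ · x) (sum_range_exitAt_le_one Λ · x)

lemma exitProb_of_notMem {Λ : Set ℤ} {x : ℤ} (hx : x ∉ Λ) : exitProb Λ x = 1 := by
  rw [exitProb_eq_tsum_exitAt, (summable_exitAt Λ x).tsum_eq_zero_add]
  simp [exitAt_zero, exitAt_succ, hx]

lemma exitProb_of_mem {Λ : Set ℤ} {x : ℤ} (hx : x ∈ Λ) :
    exitProb Λ x = (1 - kill x) / 2 * (exitProb Λ (x - 1) + exitProb Λ (x + 1)) := by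
  simp only [exitProb_eq_tsum_exitAt, (summable_exitAt Λ x).tsum_eq_zero_add, exitAt_zero,
    exitAt_succ, hx, if_true, zero_add, tsum_mul_left,
    (summable_exitAt Λ (x - 1)).tsum_add (summable_exitAt Λ (x + 1))]

lemma eq_add_mul_of_sub_eq_sub {f : ℤ → ℝ} {a b : ℤ}
    (h : ∀ x, a < x → x < b → f (x + 1) - f x = f x - f (x - 1)) :
    ∀ x, a ≤ x → x ≤ b → f x = f a + (x - a) * (f (a + 1) - f a) := by
  have hinc : ∀ x, a ≤ x → x < b → f (x + 1) - f x = f (a + 1) - f a := by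
    intro x hax
    induction x, hax using Int.leInduction with
    | base => intro; rfl
    | succ x hax ih =>
      intro hxb
      rw [h (x + 1) (by omega) hxb, add_sub_cancel_right, ih (by omega)]
  intro x hax
  induction x, hax using Int.leInduction with
  | base => intro; simp
  | succ x hax ih =>
    intro hxb
    push_cast
    linear_combination hinc x hax (by omega) + ih (by omega)

lemma quarter_mul_div_eq {p m eₘ e₀ eₚ : ℝ} (hp : 0 < p) (hm : 0 < m)
    (hₚ : e₀ + p * (eₚ - e₀) = 1) (hₘ : e₀ + m * (eₘ - e₀) = 1) (h₀ : 4 * e₀ = eₘ + eₚ) :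
    1 / 4 * eₚ / e₀ = 1 / 4 + m / (2 * (p + m)) := by
  have hD : 0 < p + m + 2 * p * m := by positivity
  have he₀ : e₀ * (p + m + 2 * p * m) = p + m := by
    linear_combination m * hₚ + p * hₘ + m * p * h₀
  have heₚ : eₚ * (p + m + 2 * p * m) = p + 3 * m := by
    linear_combination (1 + 3 * m) * hₚ + (p - 1) * hₘ + m * (p - 1) * h₀
  have he₀_ne : e₀ ≠ 0 := by
    rintro rfl
    linarith
  have hratio : eₚ * (p + m) = e₀ * (p + 3 * m) := by
    refine mul_right_cancel₀ hD.ne' ?_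
    linear_combination (p + m) * heₚ - (p + 3 * m) * he₀
  field_simp
  linear_combination 2 * hratio

/-- The numerator `P₀[S₁ = 1, E_R]` is `(1 - kill 0) / 2 · P₁[E_R] = 1/4 · exitProb Λ 1`. -/
theorem gamblers_ruin_conditioned_first_step (bm bp R : ℤ)
    (hbm : 1 ≤ bm) (hbp : 1 ≤ bp) (hR : 1 ≤ R) :
    (1 / 4 * exitProb (Set.Ioo (-(bm * R)) (bp * R)) 1) /
        exitProb (Set.Ioo (-(bm * R)) (bp * R)) 0
      = 1 / 4 + (bm : ℝ) / (2 * ((bp : ℝ) + (bm : ℝ))) := by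
  set Λ := Set.Ioo (-(bm * R)) (bp * R)
  set E := exitProb Λ
  have hp : 1 ≤ bp * R := one_le_mul_of_one_le_of_one_le hbp hR
  have hm : 1 ≤ bm * R := one_le_mul_of_one_le_of_one_le hbm hR
  have harmonic : ∀ x ∈ Λ, x ≠ 0 → 2 * E x = E (x - 1) + E (x + 1) := fun x hx hx0 => by
    have h : E x = (1 - kill x) / 2 * (E (x - 1) + E (x + 1)) := exitProb_of_mem hx
    rw [show kill x = 0 from if_neg hx0] at h
    linarith
  have hzero : 4 * E 0 = E (-1) + E 1 := by
    have h : E 0 = (1 - kill 0) / 2 * (E (-1) + E 1) := exitProb_of_mem ⟨by omega, by omega⟩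
    rw [show kill 0 = 1 / 2 from if_pos rfl] at h
    linarith
  have hright : E (bp * R) = E 0 + (bp * R : ℤ) * (E 1 - E 0) := by
    simpa using eq_add_mul_of_sub_eq_sub (f := E) (a := 0) (b := bp * R)
      (fun x h0 hx => by linarith [harmonic x ⟨by omega, hx⟩ h0.ne']) (bp * R) (by omega) le_rfl
  have hleft : E (-(bm * R)) = E 0 + (bm * R : ℤ) * (E (-1) - E 0) := by
    simpa using eq_add_mul_of_sub_eq_sub (f := fun x => E (-x)) (a := 0) (b := bm * R)
      (fun x h0 hx => by
        have := harmonic (-x) ⟨by omega, by omega⟩ (by omega)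
        rw [show -x - 1 = -(x + 1) by ring, show -x + 1 = -(x - 1) by ring] at this
        linarith) (bm * R) (by omega) le_rfl
  have hEp : E (bp * R) = 1 := exitProb_of_notMem fun h => lt_irrefl _ h.2
  have hEm : E (-(bm * R)) = 1 := exitProb_of_notMem fun h => lt_irrefl _ h.1
  rw [quarter_mul_div_eq (by exact_mod_cast hp) (by exact_mod_cast hm) (hright.symm.trans hEp)
    (hleft.symm.trans hEm) hzero]
  push_cast
  rw [← add_mul, ← mul_assoc, mul_div_mul_right _ _ (by positivity)]

end KRW1d
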